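/- arXiv:2110.04822 — 2 statements merged into one kernel-verified Lean document; each statement's English description precedes it below -/
import Mathlib

section
/- Let g: ℝᵈ → ℝ. If x ↦ ½|x|² − g(x) is convex, then y ↦ g*(y) − ½|y|² is convex, where g* is the Legendre–Fenchel transform of g. -/
/-!
With `h x = ½‖x‖² - g x` and the substitution `w = u + z`,
`⟪w, z⟫ - g w - ½‖z‖² = h (u + z) - ½‖u‖²`, so `g* - ½‖·‖²` is the supremum over `u` of the
convex functions `z ↦ h (u + z) - ½‖u‖²`, and a supremum of convex functions is convex.
-/

open Set

theorem EReal.iSup_coe_sub_coe {ι : Sort*} (f : ι → ℝ) (c : ℝ) :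
    (⨆ i, (f i : EReal)) - c = ⨆ i, ((f i - c : ℝ) : EReal) := by
  refine le_antisymm ?_ (iSup_le fun i => ?_)
  · rw [EReal.sub_le_iff_le_add (.inl (EReal.coe_ne_bot c)) (.inl (EReal.coe_ne_top c))]
    refine iSup_le fun i => ?_
    calc (f i : EReal) = ((f i - c : ℝ) : EReal) + c := by
          rw [← EReal.coe_add, _root_.sub_add_cancel]
      _ ≤ _ := add_le_add_left (le_iSup (fun i => ((f i - c : ℝ) : EReal)) i) _
  · rw [EReal.coe_sub]
    exact EReal.sub_le_sub (le_iSup (fun i => (f i : EReal)) i) le_rfl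

theorem EReal.iSup_convexOn_le_combo {ι : Sort*} {E : Type*} [AddCommMonoid E] [Module ℝ E]
    {s : Set E} {f : ι → E → ℝ} (hf : ∀ i, ConvexOn ℝ s (f i)) {x y : E} (hx : x ∈ s)
    (hy : y ∈ s) {a b : ℝ} (ha : 0 ≤ a) (hb : 0 ≤ b) (hab : a + b = 1) :
    ⨆ i, (f i (a • x + b • y) : EReal) ≤
      (a : EReal) * (⨆ i, (f i x : EReal)) + (b : EReal) * ⨆ i, (f i y : EReal) := by
  refine iSup_le fun i => ?_
  calc (f i (a • x + b • y) : EReal) ≤ ((a * f i x + b * f i y : ℝ) : EReal) :=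
        EReal.coe_le_coe_iff.2 ((hf i).2 hx hy ha hb hab)
    _ = (a : EReal) * f i x + (b : EReal) * f i y := by
        rw [EReal.coe_add, EReal.coe_mul, EReal.coe_mul]
    _ ≤ _ := add_le_add
        (mul_le_mul_of_nonneg_left (le_iSup (fun i => (f i x : EReal)) i) (by exact_mod_cast ha))
        (mul_le_mul_of_nonneg_left (le_iSup (fun i => (f i y : EReal)) i) (by exact_mod_cast hb))

section InnerProductSpace

variable {E : Type*} [NormedAddCommGroup E] [InnerProductSpace ℝ E]

theorem inner_add_self_right_sub_half_norm_sq (u v : E) :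
    inner ℝ (u + v) v - 1 / 2 * ‖v‖ ^ 2 = 1 / 2 * ‖u + v‖ ^ 2 - 1 / 2 * ‖u‖ ^ 2 := by
  rw [inner_add_left, real_inner_self_eq_norm_sq, norm_add_sq_real]
  ring

theorem legendre_sub_half_norm_sq_eq_iSup (g : E → ℝ) (z : E) :
    (⨆ w, ((inner ℝ w z - g w : ℝ) : EReal)) - ((1 / 2 * ‖z‖ ^ 2 : ℝ) : EReal) =
      ⨆ u, ((1 / 2 * ‖u + z‖ ^ 2 - g (u + z) - 1 / 2 * ‖u‖ ^ 2 : ℝ) : EReal) := by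
  rw [EReal.iSup_coe_sub_coe, ← (Equiv.addRight z).iSup_comp]
  refine iSup_congr fun u => EReal.coe_eq_coe_iff.2 ?_
  rw [Equiv.coe_addRight]
  linarith [inner_add_self_right_sub_half_norm_sq u z]

end InnerProductSpace

/-- Lemma A.2(i) (lm_HJ_cx_duality): if ½|x|² − g is convex then g* − ½|y|² is
convex (as an extended-real-valued function, convexity stated pointwise). -/
theorem stmt_6 {d : ℕ} (g : EuclideanSpace ℝ (Fin d) → ℝ)
    (hg : ConvexOn ℝ Set.univ (fun x => (1 / 2 : ℝ) * ‖x‖ ^ 2 - g x)) :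
    ∀ F : EuclideanSpace ℝ (Fin d) → EReal,
      (∀ z, F z = (⨆ w, (((inner ℝ w z : ℝ) - g w : ℝ) : EReal))
          - (((1 / 2 : ℝ) * ‖z‖ ^ 2 : ℝ) : EReal)) →
      ∀ x y : EuclideanSpace ℝ (Fin d), ∀ a b : ℝ, 0 ≤ a → 0 ≤ b → a + b = 1 →
        F (a • x + b • y) ≤ ((a : ℝ) : EReal) * F x + ((b : ℝ) : EReal) * F y := by
  intro F hF x y a b ha hb hab
  have hconv : ∀ u, ConvexOn ℝ univ
      (fun z => 1 / 2 * ‖u + z‖ ^ 2 - g (u + z) - 1 / 2 * ‖u‖ ^ 2) := fun u =>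
    (hg.translate_right u).sub (concaveOn_const _ convex_univ)
  simp only [hF, legendre_sub_half_norm_sq_eq_iSup]
  exact EReal.iSup_convexOn_le_combo hconv (mem_univ x) (mem_univ y) ha hb hab
end

section
/- Let μ ∈ P₂(ℝᵈ), ν ∈ P₂^{ac}(ℝᵈ), and suppose there exists a convex expansion φ (i.e., φ = ξ* for some proper ξ with D²ξ ≤ Id distributionally; equivalently D²φ ≥ Id) such that (∇φ)_# ν = μ. Then the forward projection of ν onto the cone P^{cx}_{2,μ≤} = { ξ ∈ P₂(ℝᵈ) : μ ≤_cx ξ } with respect to quadratic Wasserstein cost coincides with μ; that is, 𝒯₂(μ, ν) = inf { 𝒯₂(ξ, ν) : ξ ∈ P₂(ℝᵈ), μ ≤_cx ξ }. -/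
open MeasureTheory Set Filter Topology
open scoped ENNReal RealInnerProductSpace

/-!
Write `φ̃ = |·|² - 2 φ*`. Since `φ - ½|·|²` is convex, `½|x|² - φ*(x)` is the partial minimum
over `y` of the jointly convex function `½|x - y|² + φ(y) - ½|y|²`, so `φ̃` is convex, with
quadratic growth. The Fenchel–Young inequality at `(x, y)` and its equality case at `(∇φ(y), y)`
give `|∇φ(y) - y|² + φ̃(x) ≤ |x - y|² + φ̃(∇φ(y))` for every `x` and `ν`-a.e. `y`. Integrating
this against a coupling of `ξ` and `ν`, and using `∫ φ̃ dμ ≤ ∫ φ̃ dξ` (the convex order, extended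
from Lipschitz test functions to `φ̃` by Pasch–Hausdorff envelopes), shows that the cost of the
coupling is at least `∫ |∇φ - id|² dν ≥ 𝒯₂(μ, ν)`. The reverse inequality is the choice `ξ = μ`.
-/

/-- Convex order between measures on Euclidean space, tested against Lipschitz
convex functions (an equivalent defining class, cf. Lemma 5.2 of the paper). -/
def CxOrder {d : ℕ} (η ν : Measure (EuclideanSpace ℝ (Fin d))) : Prop :=
  ∀ φ : EuclideanSpace ℝ (Fin d) → ℝ,
    ConvexOn ℝ Set.univ φ → (∃ K, LipschitzWith K φ) →
    ∫ x, φ x ∂η ≤ ∫ x, φ x ∂ν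

/-- The quadratic transportation cost `𝒯₂(ρ, σ)`. -/
noncomputable def T2 {d : ℕ} (ρ σ : Measure (EuclideanSpace ℝ (Fin d))) : ℝ≥0∞ :=
  ⨅ (π : Measure (EuclideanSpace ℝ (Fin d) × EuclideanSpace ℝ (Fin d)))
    (_ : IsProbabilityMeasure π) (_ : π.map Prod.fst = ρ) (_ : π.map Prod.snd = σ),
    ∫⁻ p, ENNReal.ofReal (‖p.1 - p.2‖ ^ 2) ∂π

theorem ConvexOn.ciInf_snd {E F : Type*} [AddCommGroup E] [Module ℝ E] [AddCommGroup F]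
    [Module ℝ F] {G : E × F → ℝ} (hG : ConvexOn ℝ univ G)
    (hbdd : ∀ x, BddBelow (range fun y => G (x, y))) :
    ConvexOn ℝ univ fun x => ⨅ y, G (x, y) := by
  refine ⟨convex_univ, fun x₁ _ x₂ _ a b ha hb hab => ?_⟩
  simp only [smul_eq_mul, Real.mul_iInf_of_nonneg ha, Real.mul_iInf_of_nonneg hb]
  refine le_ciInf_add_ciInf fun y₁ y₂ => ?_
  calc ⨅ y, G (a • x₁ + b • x₂, y) ≤ G (a • (x₁, y₁) + b • (x₂, y₂)) := ciInf_le (hbdd _) _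
    _ ≤ a * G (x₁, y₁) + b * G (x₂, y₂) := hG.2 trivial trivial ha hb hab

theorem ConvexOn.add_apply_sub_le {E : Type*} [NormedAddCommGroup E] [NormedSpace ℝ E]
    {f : E → ℝ} {f' : E →L[ℝ] ℝ} {w : E} (hf : ConvexOn ℝ univ f) (hf' : HasFDerivAt f f' w)
    (z : E) : f w + f' (z - w) ≤ f z := by
  have hline : HasDerivAt (f ∘ AffineMap.lineMap (k := ℝ) w z) (f' (z - w)) 0 := by
    refine HasFDerivAt.comp_hasDerivAt (0 : ℝ) ?_ AffineMap.hasDerivAt_lineMap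
    simpa using hf'
  have := (hf.comp_affineMap (AffineMap.lineMap (k := ℝ) w z)).le_slope_of_hasDerivAt
    (mem_univ 0) (mem_univ 1) zero_lt_one hline
  simp only [slope_def_field, Function.comp_apply, AffineMap.lineMap_apply_zero,
    AffineMap.lineMap_apply_one, sub_zero, div_one] at this
  linarith

theorem LocallyLipschitz.ae_differentiableAt {E F : Type*} [NormedAddCommGroup E]
    [NormedSpace ℝ E] [FiniteDimensional ℝ E] [MeasurableSpace E] [BorelSpace E]
    [NormedAddCommGroup F] [NormedSpace ℝ F] [FiniteDimensional ℝ F]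
    {μ : Measure E} [μ.IsAddHaarMeasure] {f : E → F} (hf : LocallyLipschitz f) :
    ∀ᵐ x ∂μ, DifferentiableAt ℝ f x := by
  refine measure_null_of_locally_null _ fun x _ => ?_
  obtain ⟨K, t, ht, hK⟩ := hf x
  obtain ⟨u, hut, hu, hxu⟩ := mem_nhds_iff.mp ht
  refine ⟨_, inter_mem_nhdsWithin _ (hu.mem_nhds hxu),
    measure_mono_null ?_ (ae_iff.mp ((hK.mono hut).ae_differentiableWithinAt_of_mem (μ := μ)))⟩
  rintro y ⟨hyd, hyu⟩ hy
  exact hyd ((hy hyu).differentiableAt (hu.mem_nhds hyu))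

section InnerProductSpace

variable {E : Type*} [NormedAddCommGroup E] [InnerProductSpace ℝ E]

theorem ConvexOn.add_inner_gradient_le [CompleteSpace E] {f : E → ℝ} {w : E}
    (hf : ConvexOn ℝ univ f) (hw : DifferentiableAt ℝ f w) (z : E) :
    f w + ⟪gradient f w, z - w⟫ ≤ f z := by
  simpa [InnerProductSpace.toDual_apply_apply] using
    hf.add_apply_sub_le (hasGradientAt_iff_hasFDerivAt.mp hw.hasGradientAt) z

theorem ConvexOn.exists_add_inner_le [CompleteSpace E] {f : E → ℝ} (hf : ConvexOn ℝ univ f)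
    (hfc : LowerSemicontinuous f) : ∃ (p : E) (c : ℝ), ∀ x, c + ⟪p, x⟫ ≤ f x := by
  obtain ⟨l, c, hl, -⟩ := hf.exists_affine_le_of_lt (𝕜 := ℝ) (mem_univ 0) (sub_one_lt (f 0))
    isClosed_univ (hfc.lowerSemicontinuousOn univ)
  refine ⟨(InnerProductSpace.toDual ℝ E).symm l, c, fun x => ?_⟩
  simpa [InnerProductSpace.toDual_symm_apply, add_comm] using hl ⟨x, mem_univ x⟩

/-- Junk value `0` where the supremum is infinite; this does not occur below, where `f` always
dominates `½|·|²` plus an affine function. -/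
noncomputable def convexConjugate (f : E → ℝ) (x : E) : ℝ := ⨆ y, ⟪x, y⟫ - f y

/-- The paper's admissible dual function `φ̃ = |·|² - 2 φ*`. -/
noncomputable def dualPotential (f : E → ℝ) (x : E) : ℝ := ‖x‖ ^ 2 - 2 * convexConjugate f x

theorem convexConjugate_gradient_le [CompleteSpace E] {f : E → ℝ} {y : E}
    (hf : ConvexOn ℝ univ f) (hy : DifferentiableAt ℝ f y) :
    convexConjugate f (gradient f y) ≤ ⟪gradient f y, y⟫ - f y :=
  ciSup_le fun z => by
    have := hf.add_inner_gradient_le hy z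
    rw [inner_sub_right] at this
    linarith

section QuadraticMinorant

variable {f : E → ℝ} {p : E} {c : ℝ} (hf : ∀ y, c + ⟪p, y⟫ ≤ f y - 1 / 2 * ‖y‖ ^ 2)
include hf

theorem inner_sub_le_of_quadratic_minorant (x y : E) :
    ⟪x, y⟫ - f y ≤ 1 / 2 * ‖x - p‖ ^ 2 - c := by
  have := hf y
  have : ⟪x - p, y⟫ ≤ ‖x - p‖ * ‖y‖ := real_inner_le_norm _ _
  rw [inner_sub_left] at this
  nlinarith [sq_nonneg (‖x - p‖ - ‖y‖)]

theorem inner_sub_le_convexConjugate (x y : E) : ⟪x, y⟫ - f y ≤ convexConjugate f x :=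
  le_ciSup ⟨_, forall_mem_range.mpr (inner_sub_le_of_quadratic_minorant hf x)⟩ y

theorem convexConjugate_le (x : E) : convexConjugate f x ≤ 1 / 2 * ‖x - p‖ ^ 2 - c :=
  ciSup_le (inner_sub_le_of_quadratic_minorant hf x)

theorem dualPotential_le_norm_sub_sq_add (x y : E) :
    dualPotential f x ≤ ‖x - y‖ ^ 2 + 2 * (f y - 1 / 2 * ‖y‖ ^ 2) := by
  have := inner_sub_le_convexConjugate hf x y
  rw [dualPotential, norm_sub_sq_real]
  linarith

theorem dualPotential_eq_iInf (x : E) :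
    dualPotential f x = ⨅ y, ‖x - y‖ ^ 2 + 2 * (f y - 1 / 2 * ‖y‖ ^ 2) := by
  refine le_antisymm (le_ciInf (dualPotential_le_norm_sub_sq_add hf x)) ?_
  suffices convexConjugate f x ≤ (‖x‖ ^ 2 - ⨅ y, ‖x - y‖ ^ 2 + 2 * (f y - 1 / 2 * ‖y‖ ^ 2)) / 2 by
    rw [dualPotential]; linarith
  refine ciSup_le fun y => ?_
  have := ciInf_le ⟨_, forall_mem_range.mpr (dualPotential_le_norm_sub_sq_add hf x)⟩ y
  rw [norm_sub_sq_real] at this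
  linarith

theorem convexOn_dualPotential (hconv : ConvexOn ℝ univ fun y => f y - 1 / 2 * ‖y‖ ^ 2) :
    ConvexOn ℝ univ (dualPotential f) := by
  have hsq : ConvexOn ℝ univ fun z : E × E => ‖z.1 - z.2‖ ^ 2 :=
    (convexOn_univ_norm.pow (fun _ _ => norm_nonneg _) 2).comp_linearMap
      (LinearMap.fst ℝ E E - LinearMap.snd ℝ E E)
  have hG : ConvexOn ℝ univ fun z : E × E => ‖z.1 - z.2‖ ^ 2 + 2 * (f z.2 - 1 / 2 * ‖z.2‖ ^ 2) :=
    hsq.add ((hconv.comp_linearMap (LinearMap.snd ℝ E E)).smul zero_le_two)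
  have := hG.ciInf_snd fun x =>
    ⟨_, forall_mem_range.mpr (dualPotential_le_norm_sub_sq_add hf x)⟩
  simpa only [← dualPotential_eq_iInf hf] using this

theorem dualPotential_le (x : E) : dualPotential f x ≤ ‖x‖ ^ 2 + 2 * f 0 := by
  have := inner_sub_le_convexConjugate hf x 0
  simp only [inner_zero_right, zero_sub] at this
  rw [dualPotential]; linarith

theorem add_inner_le_dualPotential (x : E) :
    (2 * c - ‖p‖ ^ 2) + ⟪(2 : ℝ) • p, x⟫ ≤ dualPotential f x := by
  have := convexConjugate_le hf x
  rw [norm_sub_sq_real, real_inner_comm] at this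
  rw [dualPotential, real_inner_smul_left]; linarith

theorem norm_sub_sq_add_dualPotential_le [CompleteSpace E] (hconv : ConvexOn ℝ univ f) {y : E}
    (hy : DifferentiableAt ℝ f y) (x : E) :
    ‖gradient f y - y‖ ^ 2 + dualPotential f x ≤ ‖x - y‖ ^ 2 + dualPotential f (gradient f y) := by
  have h₁ := convexConjugate_gradient_le hconv hy
  have h₂ := inner_sub_le_convexConjugate hf x y
  simp only [dualPotential, norm_sub_sq_real]
  linarith

end QuadraticMinorant

/-- The Pasch–Hausdorff envelope of `ψ`: its largest `K`-Lipschitz minorant. -/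
noncomputable def lipschitzEnvelope (ψ : E → ℝ) (K : ℝ) (x : E) : ℝ := ⨅ y, ψ y + K * ‖x - y‖

section AffineMinorant

variable {ψ : E → ℝ} {p : E} {c : ℝ} (hψ : ∀ x, c + ⟪p, x⟫ ≤ ψ x)
include hψ

theorem add_inner_le_add_mul_norm_sub (K : ℝ) (x y : E) :
    c + ⟪p, x⟫ + (K - ‖p‖) * ‖x - y‖ ≤ ψ y + K * ‖x - y‖ := by
  have h₁ := hψ y
  have h₂ : ⟪p, x - y⟫ ≤ ‖p‖ * ‖x - y‖ := real_inner_le_norm _ _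
  rw [inner_sub_right] at h₂
  linarith

theorem bddBelow_range_add_mul_norm_sub {K : ℝ} (hK : ‖p‖ ≤ K) (x : E) :
    BddBelow (range fun y => ψ y + K * ‖x - y‖) :=
  ⟨c + ⟪p, x⟫, forall_mem_range.mpr fun y => by
    nlinarith [add_inner_le_add_mul_norm_sub hψ K x y, norm_nonneg (x - y)]⟩

theorem add_inner_le_lipschitzEnvelope {K : ℝ} (hK : ‖p‖ ≤ K) (x : E) :
    c + ⟪p, x⟫ ≤ lipschitzEnvelope ψ K x :=
  le_ciInf fun y => by nlinarith [add_inner_le_add_mul_norm_sub hψ K x y, norm_nonneg (x - y)]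

theorem lipschitzEnvelope_le {K : ℝ} (hK : ‖p‖ ≤ K) (x : E) : lipschitzEnvelope ψ K x ≤ ψ x :=
  (ciInf_le (bddBelow_range_add_mul_norm_sub hψ hK x) x).trans_eq (by simp)

theorem lipschitzEnvelope_mono {K : ℝ} (hK : ‖p‖ ≤ K) {K' : ℝ} (hKK' : K ≤ K') (x : E) :
    lipschitzEnvelope ψ K x ≤ lipschitzEnvelope ψ K' x :=
  ciInf_mono (bddBelow_range_add_mul_norm_sub hψ hK x) fun y => by gcongr

theorem lipschitzWith_lipschitzEnvelope {K : ℝ} (hK : ‖p‖ ≤ K) :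
    LipschitzWith K.toNNReal (lipschitzEnvelope ψ K) := by
  have hK₀ : 0 ≤ K := (norm_nonneg p).trans hK
  have key (x x' : E) : lipschitzEnvelope ψ K x ≤ lipschitzEnvelope ψ K x' + K * ‖x - x'‖ := by
    rw [← sub_le_iff_le_add]
    refine le_ciInf fun y => ?_
    have h₁ := ciInf_le (bddBelow_range_add_mul_norm_sub hψ hK x) y
    have h₂ := mul_le_mul_of_nonneg_left (norm_sub_le_norm_sub_add_norm_sub x x' y) hK₀
    simp only [lipschitzEnvelope] at h₁ ⊢
    linarith
  refine LipschitzWith.of_dist_le_mul fun x x' => ?_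
  rw [Real.dist_eq, dist_eq_norm, Real.coe_toNNReal _ hK₀, abs_sub_le_iff]
  have := key x' x
  rw [norm_sub_rev] at this
  exact ⟨by linarith [key x x'], by linarith⟩

theorem convexOn_lipschitzEnvelope {K : ℝ} (hconv : ConvexOn ℝ univ ψ) (hK : ‖p‖ ≤ K) :
    ConvexOn ℝ univ (lipschitzEnvelope ψ K) := by
  have hG : ConvexOn ℝ univ fun z : E × E => ψ z.2 + K * ‖z.1 - z.2‖ :=
    (hconv.comp_linearMap (LinearMap.snd ℝ E E)).add
      ((convexOn_univ_norm.comp_linearMap (LinearMap.fst ℝ E E - LinearMap.snd ℝ E E)).smul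
        ((norm_nonneg p).trans hK))
  exact hG.ciInf_snd (bddBelow_range_add_mul_norm_sub hψ hK)

theorem eventually_lipschitzEnvelope_eq (hloc : LocallyLipschitz ψ) (x : E) :
    ∀ᶠ K in atTop, lipschitzEnvelope ψ K x = ψ x := by
  obtain ⟨L, t, ht, hL⟩ := hloc x
  obtain ⟨r, hr, hrt⟩ := Metric.mem_nhds_iff.mp ht
  filter_upwards [eventually_ge_atTop (L : ℝ), eventually_ge_atTop ‖p‖,
    eventually_ge_atTop (‖p‖ + (ψ x - (c + ⟪p, x⟫)) / r)] with K hKL hK hKr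
  refine (lipschitzEnvelope_le hψ hK x).antisymm (le_ciInf fun y => ?_)
  by_cases hy : y ∈ Metric.ball x r
  · have := (hL.mono hrt).dist_le_mul x (Metric.mem_ball_self hr) y hy
    rw [Real.dist_eq, dist_eq_norm, abs_sub_le_iff] at this
    nlinarith [norm_nonneg (x - y)]
  · have hry : r ≤ ‖x - y‖ := by simpa [dist_eq_norm, norm_sub_rev] using hy
    have h₁ := add_inner_le_add_mul_norm_sub hψ K x y
    have h₂ : ψ x - (c + ⟪p, x⟫) ≤ (K - ‖p‖) * r := by
      rw [← div_le_iff₀ hr]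
      linarith
    nlinarith

end AffineMinorant

theorem integrable_add_inner [MeasurableSpace E] [OpensMeasurableSpace E]
    [SecondCountableTopology E] {μ : Measure E} [IsFiniteMeasure μ]
    (hμ2 : Integrable (fun x => ‖x‖ ^ 2) μ) (p : E) (c : ℝ) :
    Integrable (fun x => c + ⟪p, x⟫) μ := by
  have : MemLp id 2 μ := (memLp_two_iff_integrable_sq_norm aestronglyMeasurable_id).mpr hμ2
  exact (integrable_const c).add ((this.integrable one_le_two).const_inner p)

end InnerProductSpace

theorem lintegral_cost_map_le_of_dual {X : Type*} [MeasurableSpace X] {ν ξ : Measure X}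
    {π : Measure (X × X)} (hπ₁ : π.map Prod.fst = ξ) (hπ₂ : π.map Prod.snd = ν)
    {cost : X → X → ℝ} (hcost : Measurable fun z : X × X => cost z.1 z.2)
    (hcost₀ : ∀ x y, 0 ≤ cost x y) (hcostπ : Integrable (fun z : X × X => cost z.1 z.2) π)
    {T : X → X} (hT : Measurable T) {ψ : X → ℝ} (hψ : Measurable ψ)
    (hψT : Integrable ψ (ν.map T)) (hψξ : Integrable ψ ξ)
    (horder : ∫ x, ψ x ∂(ν.map T) ≤ ∫ x, ψ x ∂ξ)
    (hdual : ∀ᵐ y ∂ν, ∀ x, cost (T y) y + ψ x ≤ cost x y + ψ (T y)) :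
    ∫⁻ y, ENNReal.ofReal (cost (T y) y) ∂ν ≤ ∫⁻ z, ENNReal.ofReal (cost z.1 z.2) ∂π := by
  have hTπ : ν.map T = π.map (T ∘ Prod.snd) := by
    rw [← hπ₂, Measure.map_map hT measurable_snd]
  subst hπ₁ hπ₂
  rw [hTπ] at hψT horder
  rw [integral_map (hT.comp measurable_snd).aemeasurable hψ.aestronglyMeasurable,
    integral_map measurable_fst.aemeasurable hψ.aestronglyMeasurable] at horder
  have hψTπ : Integrable (fun z : X × X => ψ (T z.2)) π :=
    (integrable_map_measure hψ.aestronglyMeasurable (hT.comp measurable_snd).aemeasurable).mp hψT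
  have hψξπ : Integrable (fun z : X × X => ψ z.1) π :=
    (integrable_map_measure hψ.aestronglyMeasurable measurable_fst.aemeasurable).mp hψξ
  have hψdiff : Integrable (fun z : X × X => ψ (T z.2) - ψ z.1) π := hψTπ.sub hψξπ
  have hbound : Integrable (fun z : X × X => cost z.1 z.2 + (ψ (T z.2) - ψ z.1)) π :=
    hcostπ.add hψdiff
  have hdualπ : ∀ᵐ z ∂π, cost (T z.2) z.2 ≤ cost z.1 z.2 + (ψ (T z.2) - ψ z.1) := by
    filter_upwards [ae_of_ae_map measurable_snd.aemeasurable hdual] with z hz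
    linarith [hz z.1]
  have hTcost : Measurable fun y => cost (T y) y := hcost.comp (hT.prodMk measurable_id)
  have hint : Integrable (fun z : X × X => cost (T z.2) z.2) π :=
    integrable_of_le_of_le (hTcost.comp measurable_snd).aestronglyMeasurable
      (ae_of_all _ fun z => hcost₀ _ _) hdualπ (integrable_zero _ _ _) hbound
  rw [lintegral_map hTcost.ennreal_ofReal measurable_snd,
    ← ofReal_integral_eq_lintegral_ofReal hint (ae_of_all _ fun z => hcost₀ _ _),
    ← ofReal_integral_eq_lintegral_ofReal hcostπ (ae_of_all _ fun z => hcost₀ _ _)]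
  refine ENNReal.ofReal_le_ofReal ?_
  calc ∫ z, cost (T z.2) z.2 ∂π ≤ ∫ z, cost z.1 z.2 + (ψ (T z.2) - ψ z.1) ∂π :=
        integral_mono_ae hint hbound hdualπ
    _ = ∫ z, cost z.1 z.2 ∂π + (∫ z, ψ (T z.2) ∂π - ∫ z, ψ z.1 ∂π) := by
        rw [integral_add hcostπ hψdiff, integral_sub hψTπ hψξπ]
    _ ≤ ∫ z, cost z.1 z.2 ∂π := by
        simp only [Function.comp_apply] at horder
        linarith

section Euclidean

variable {d : ℕ}

local notation "ℝᵈ" => EuclideanSpace ℝ (Fin d)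

/-- Monotone convergence along the Pasch–Hausdorff envelopes of `ψ`, which are admissible test
functions for `CxOrder`. -/
theorem CxOrder.integral_le_of_convexOn {μ ξ : Measure ℝᵈ} [IsFiniteMeasure μ]
    [IsFiniteMeasure ξ] (h : CxOrder μ ξ) (hμ2 : Integrable (fun x => ‖x‖ ^ 2) μ)
    (hξ2 : Integrable (fun x => ‖x‖ ^ 2) ξ) {ψ : ℝᵈ → ℝ} (hψ : ConvexOn ℝ univ ψ)
    (hψμ : Integrable ψ μ) (hψξ : Integrable ψ ξ) : ∫ x, ψ x ∂μ ≤ ∫ x, ψ x ∂ξ := by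
  obtain ⟨p, c, hpc⟩ := hψ.exists_add_inner_le hψ.locallyLipschitz.continuous.lowerSemicontinuous
  have hK (n : ℕ) : ‖p‖ ≤ ‖p‖ + n := le_add_of_nonneg_right n.cast_nonneg
  have hint {η : Measure ℝᵈ} [IsFiniteMeasure η] (hη2 : Integrable (fun x => ‖x‖ ^ 2) η)
      (hψη : Integrable ψ η) (n : ℕ) : Integrable (lipschitzEnvelope ψ (‖p‖ + n)) η :=
    integrable_of_le_of_le
      (lipschitzWith_lipschitzEnvelope hpc (hK n)).continuous.aestronglyMeasurable
      (ae_of_all _ (add_inner_le_lipschitzEnvelope hpc (hK n)))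
      (ae_of_all _ (lipschitzEnvelope_le hpc (hK n))) (integrable_add_inner hη2 p c) hψη
  have hmono (x : ℝᵈ) : Monotone fun n : ℕ => lipschitzEnvelope ψ (‖p‖ + n) x :=
    fun m n hmn => lipschitzEnvelope_mono hpc (hK m) (by gcongr) x
  have htendsto (x : ℝᵈ) :
      Tendsto (fun n : ℕ => lipschitzEnvelope ψ (‖p‖ + n) x) atTop (𝓝 (ψ x)) :=
    tendsto_const_nhds.congr' <| (tendsto_atTop_add_const_left _ _ tendsto_natCast_atTop_atTop
      |>.eventually (eventually_lipschitzEnvelope_eq hpc hψ.locallyLipschitz x)).mono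
        fun _ h => h.symm
  have hlim {η : Measure ℝᵈ} [IsFiniteMeasure η] (hη2 : Integrable (fun x => ‖x‖ ^ 2) η)
      (hψη : Integrable ψ η) :
      Tendsto (fun n : ℕ => ∫ x, lipschitzEnvelope ψ (‖p‖ + n) x ∂η) atTop (𝓝 (∫ x, ψ x ∂η)) :=
    integral_tendsto_of_tendsto_of_monotone (hint hη2 hψη) hψη (ae_of_all _ hmono)
      (ae_of_all _ htendsto)
  exact le_of_tendsto_of_tendsto' (hlim hμ2 hψμ) (hlim hξ2 hψξ) fun n =>
    h _ (convexOn_lipschitzEnvelope hpc hψ (hK n)) ⟨_, lipschitzWith_lipschitzEnvelope hpc (hK n)⟩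

theorem le_T2 {ρ σ : Measure ℝᵈ} {C : ℝ≥0∞}
    (h : ∀ π : Measure (ℝᵈ × ℝᵈ), IsProbabilityMeasure π → π.map Prod.fst = ρ →
      π.map Prod.snd = σ → C ≤ ∫⁻ z, ENNReal.ofReal (‖z.1 - z.2‖ ^ 2) ∂π) :
    C ≤ T2 ρ σ :=
  le_iInf fun π => le_iInf fun hπ => le_iInf fun h₁ => le_iInf fun h₂ => h π hπ h₁ h₂

theorem T2_map_le {T : ℝᵈ → ℝᵈ} (hT : Measurable T) (ν : Measure ℝᵈ) [IsProbabilityMeasure ν] :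
    T2 (ν.map T) ν ≤ ∫⁻ y, ENNReal.ofReal (‖T y - y‖ ^ 2) ∂ν := by
  have hG : Measurable fun y => (T y, y) := hT.prodMk measurable_id
  have hπ := Measure.isProbabilityMeasure_map (μ := ν) hG.aemeasurable
  have h₁ : (ν.map fun y => (T y, y)).map Prod.fst = ν.map T := by
    rw [Measure.map_map measurable_fst hG]; rfl
  have h₂ : (ν.map fun y => (T y, y)).map Prod.snd = ν := by
    rw [Measure.map_map measurable_snd hG]; exact Measure.map_id
  refine iInf_le_of_le _ (iInf_le_of_le hπ (iInf_le_of_le h₁ (iInf_le_of_le h₂ ?_)))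
  exact (lintegral_map (f := fun z : ℝᵈ × ℝᵈ => ENNReal.ofReal (‖z.1 - z.2‖ ^ 2)) (by fun_prop)
    hG).le

theorem T2_le_T2_of_cxOrder {μ ν ξ : Measure ℝᵈ} [IsProbabilityMeasure ν] [IsFiniteMeasure ξ]
    (hμ2 : Integrable (fun x => ‖x‖ ^ 2) μ) (hξ2 : Integrable (fun x => ‖x‖ ^ 2) ξ)
    (hνac : ν ≪ volume) {φ : ℝᵈ → ℝ} (hφ : ConvexOn ℝ univ φ)
    (hexp : ConvexOn ℝ univ fun x => φ x - 1 / 2 * ‖x‖ ^ 2) (hmap : ν.map (gradient φ) = μ)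
    (hcx : CxOrder μ ξ) : T2 μ ν ≤ T2 ξ ν := by
  subst hmap
  obtain ⟨p, c, hpc⟩ :=
    hexp.exists_add_inner_le hexp.locallyLipschitz.continuous.lowerSemicontinuous
  have hψ := convexOn_dualPotential hpc hexp
  have hψint {η : Measure ℝᵈ} [IsFiniteMeasure η] (hη2 : Integrable (fun x => ‖x‖ ^ 2) η) :
      Integrable (dualPotential φ) η :=
    integrable_of_le_of_le hψ.locallyLipschitz.continuous.aestronglyMeasurable
      (ae_of_all _ (add_inner_le_dualPotential hpc)) (ae_of_all _ (dualPotential_le hpc))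
      (integrable_add_inner hη2 _ _) (hη2.add (integrable_const _))
  have hgrad : Measurable (gradient φ) :=
    (InnerProductSpace.toDual ℝ ℝᵈ).symm.continuous.measurable.comp (measurable_fderiv ℝ φ)
  have hdiff : ∀ᵐ y ∂ν, DifferentiableAt ℝ φ y :=
    hνac.ae_le hφ.locallyLipschitz.ae_differentiableAt
  refine (T2_map_le hgrad ν).trans (le_T2 fun π _ h₁ h₂ => ?_)
  by_cases hcost : ∫⁻ z, ENNReal.ofReal (‖z.1 - z.2‖ ^ 2) ∂π = ∞
  · exact hcost ▸ le_top
  have hcostπ : Integrable (fun z : ℝᵈ × ℝᵈ => ‖z.1 - z.2‖ ^ 2) π :=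
    (lintegral_ofReal_ne_top_iff_integrable (by fun_prop)
      (ae_of_all _ fun _ => by positivity)).mp hcost
  have horder := hcx.integral_le_of_convexOn hμ2 hξ2 hψ (hψint hμ2) (hψint hξ2)
  refine lintegral_cost_map_le_of_dual h₁ h₂ (cost := fun x y => ‖x - y‖ ^ 2) (by fun_prop)
    (fun _ _ => by positivity) hcostπ hgrad hψ.locallyLipschitz.continuous.measurable
    (hψint hμ2) (hψint hξ2) horder ?_
  filter_upwards [hdiff] with y hy x using norm_sub_sq_add_dualPotential_le hpc hφ hy x

end Euclidean

theorem stmt_18_general {d : ℕ} (μ ν : Measure (EuclideanSpace ℝ (Fin d)))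
    [IsProbabilityMeasure μ] [IsProbabilityMeasure ν]
    (hμ2 : Integrable (fun x => ‖x‖ ^ 2) μ)
    (hνac : ν ≪ volume)
    (φ : EuclideanSpace ℝ (Fin d) → ℝ)
    (hφconv : ConvexOn ℝ Set.univ φ)
    (hexp : ConvexOn ℝ Set.univ (fun x => φ x - (1 / 2 : ℝ) * ‖x‖ ^ 2))
    (hmap : Measure.map (gradient φ) ν = μ) :
    T2 μ ν = ⨅ (ξ : Measure (EuclideanSpace ℝ (Fin d)))
      (_ : IsProbabilityMeasure ξ) (_ : Integrable (fun x => ‖x‖ ^ 2) ξ)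
      (_ : CxOrder μ ξ), T2 ξ ν := by
  refine le_antisymm ?_ ?_
  · exact le_iInf fun ξ => le_iInf fun _ => le_iInf fun hξ2 => le_iInf fun hcx =>
      T2_le_T2_of_cxOrder hμ2 hξ2 hνac hφconv hexp hmap hcx
  · exact iInf_le_of_le μ <| iInf_le_of_le inferInstance <| iInf_le_of_le hμ2 <|
      iInf_le_of_le (fun _ _ _ => le_rfl) le_rfl

/-- Theorem 7.7 (thm_cx_exp), (ii) ⇒ (i): if `μ` is the image of `ν` under the
gradient of a convex expansion, then the forward convex order projection of `ν`
onto `P^{cx}_{2,μ≤}` is `μ` itself. -/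
theorem stmt_18 {d : ℕ} (μ ν : Measure (EuclideanSpace ℝ (Fin d)))
    [IsProbabilityMeasure μ] [IsProbabilityMeasure ν]
    (hμ2 : Integrable (fun x => ‖x‖ ^ 2) μ)
    (hν2 : Integrable (fun x => ‖x‖ ^ 2) ν)
    (hνac : ν ≪ volume)
    (φ : EuclideanSpace ℝ (Fin d) → ℝ)
    (hφconv : ConvexOn ℝ Set.univ φ) (hφlsc : LowerSemicontinuous φ)
    (hexp : ConvexOn ℝ Set.univ (fun x => φ x - (1 / 2 : ℝ) * ‖x‖ ^ 2))
    (hmap : Measure.map (gradient φ) ν = μ) :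
    T2 μ ν = ⨅ (ξ : Measure (EuclideanSpace ℝ (Fin d)))
      (_ : IsProbabilityMeasure ξ) (_ : Integrable (fun x => ‖x‖ ^ 2) ξ)
      (_ : CxOrder μ ξ), T2 ξ ν :=
  stmt_18_general μ ν hμ2 hνac φ hφconv hexp hmap
end
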